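/- Let r be a natural number, R = ℚ[x_1, …, x_r] the polynomial ring in r variables over ℚ, and regard ℚ as an R-module via evaluation of all variables at 0. Then ℚ has injective dimension at most r as an R-module: there is an exact sequence of R-modules 0 → ℚ → E_0 → E_1 → ⋯ → E_r → 0 in which each E_s is an injective R-module. -/

import Mathlib

/-!
The Koszul complex `K_•` of `R = K[xᵢ : i ∈ σ]`, with `K_s` free on the `s`-subsets of `σ` and
differential `d = ∑ xᵢ ιᵢ`, resolves `K = R ⧸ (xᵢ)`. It is exact because the homotopy
`h = ∑ eⱼ ∧ ∂ⱼ` satisfies `d h + h d = s + m` on chains of exterior degree `s` whose coefficients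
are homogeneous of degree `m` (anticommutation of the `ιᵢ` and `eⱼ ∧ ·`, plus Euler's identity),
and `s + m` is invertible in characteristic zero except on the constants of `K_0`.

The `R`-module `D = Hom_K(R, K)` is injective by Baer's criterion, so `Hom_R(-, D)` keeps `K_•`
exact. This gives `0 → Hom_R(K, D) → E_0 → E_1 → ⋯` with `E_s = Hom_R(K_s, D)`, a finite power
of `D`, hence injective, and zero for `s > |σ|`; finally `Hom_R(K, D) ≅ K`.
-/

noncomputable def qModule (r : ℕ) : Module (MvPolynomial (Fin r) ℚ) ℚ :=
  Module.compHom ℚ (MvPolynomial.eval (0 : Fin r → ℚ))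

open MvPolynomial Finset

universe u

noncomputable section

def CoinducedDual (K R : Type*) [CommRing K] [CommRing R] [Algebra K R] : Type _ := R →ₗ[K] K

namespace CoinducedDual

variable {K R : Type*} [CommRing K] [CommRing R] [Algebra K R]

instance : AddCommGroup (CoinducedDual K R) := inferInstanceAs (AddCommGroup (R →ₗ[K] K))

instance : FunLike (CoinducedDual K R) R K := inferInstanceAs (FunLike (R →ₗ[K] K) R K)

instance : LinearMapClass (CoinducedDual K R) K R K :=
  inferInstanceAs (LinearMapClass (R →ₗ[K] K) K R K)

def ofLinearMap (φ : R →ₗ[K] K) : CoinducedDual K R := φ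

@[simp] lemma ofLinearMap_apply (φ : R →ₗ[K] K) (x : R) : ofLinearMap φ x = φ x := rfl

@[ext] lemma ext {φ ψ : CoinducedDual K R} (h : ∀ x, φ x = ψ x) : φ = ψ :=
  DFunLike.ext _ _ h

@[simp] lemma add_apply (φ ψ : CoinducedDual K R) (x : R) : (φ + ψ) x = φ x + ψ x := rfl

@[simp] lemma zero_apply (x : R) : (0 : CoinducedDual K R) x = 0 := rfl

instance : SMul R (CoinducedDual K R) :=
  ⟨fun p φ => ofLinearMap ((φ : R →ₗ[K] K) ∘ₗ LinearMap.mulRight K p)⟩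

@[simp] lemma smul_apply (p : R) (φ : CoinducedDual K R) (x : R) : (p • φ) x = φ (x * p) := rfl

instance : Module R (CoinducedDual K R) where
  one_smul φ := ext fun x => by simp
  mul_smul p q φ := ext fun x => by simp [mul_left_comm, mul_comm]
  smul_zero p := ext fun x => by simp
  smul_add p φ ψ := ext fun x => by simp
  add_smul p q φ := ext fun x => by simp [mul_add]
  zero_smul φ := ext fun x => by simp

lemma apply_algebraMap (φ : CoinducedDual K R) (c : K) : φ (algebraMap K R c) = c * φ 1 := by
  rw [Algebra.algebraMap_eq_smul_one, map_smul, smul_eq_mul]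

end CoinducedDual

instance {K R : Type*} [Field K] [CommRing R] [Algebra K R] :
    Module.Injective R (CoinducedDual K R) := by
  -- Extend `x ↦ g x 1` from `I` to a functional `L` on `R`; then `r ↦ r • L` extends `g`.
  refine Module.Baer.injective fun I g => ?_
  let ℓ : I.restrictScalars K →ₗ[K] K :=
    { toFun := fun x => g ⟨x, x.2⟩ 1
      map_add' := fun x y => by
        show g (⟨x.1, x.2⟩ + ⟨y.1, y.2⟩) 1 = _
        rw [map_add]
        rfl
      map_smul' := fun c x => by
        have : (⟨c • x.1, (c • x).2⟩ : I) = algebraMap K R c • ⟨x.1, x.2⟩ :=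
          Subtype.ext (algebraMap_smul R c x.1).symm
        show g ⟨c • x.1, (c • x).2⟩ 1 = c * g ⟨x.1, x.2⟩ 1
        rw [this, map_smul, CoinducedDual.smul_apply, one_mul, CoinducedDual.apply_algebraMap] }
  obtain ⟨L, hL⟩ := LinearMap.exists_extend ℓ
  refine ⟨LinearMap.toSpanSingleton R _ (CoinducedDual.ofLinearMap L),
    fun x hx => CoinducedDual.ext fun p => ?_⟩
  have hmem : p * x ∈ I := I.mul_mem_left p hx
  calc (x • CoinducedDual.ofLinearMap L) p = ℓ ⟨p * x, hmem⟩ :=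
        LinearMap.congr_fun hL ⟨p * x, hmem⟩
    _ = g (p • ⟨x, hx⟩) 1 := rfl
    _ = g ⟨x, hx⟩ p := by rw [map_smul, CoinducedDual.smul_apply, one_mul]

section InjectiveCoefficients

variable {R : Type u} [CommRing R] {N : Type u} [AddCommGroup N] [Module R N]
  [Module.Injective R N]

lemma Module.Injective.exact_lcomp {M₁ M₂ M₃ : Type*} [AddCommGroup M₁] [AddCommGroup M₂]
    [AddCommGroup M₃] [Module R M₁] [Module R M₂] [Module R M₃] {f : M₁ →ₗ[R] M₂}
    {g : M₂ →ₗ[R] M₃} (h : Function.Exact f g) :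
    Function.Exact (LinearMap.lcomp R N g) (LinearMap.lcomp R N f) := by
  have hsurj : Function.Surjective (LinearMap.lcomp R N (LinearMap.range g).subtype) :=
    fun φ => Module.Injective.extension_property R N _ _ _ (Submodule.injective_subtype _) φ
  have h' : Function.Exact f g.rangeRestrict :=
    (Submodule.injective_subtype (LinearMap.range g)).comp_exact_iff_exact.mp h
  have := LinearMap.exact_lcomp_of_exact_of_surjective N h' g.surjective_rangeRestrict
  rwa [← hsurj.comp_exact_iff_exact] at this

lemma Module.Injective.linearMap_pi (A : Type*) [Fintype A] [DecidableEq A] :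
    Module.Injective R ((A → R) →ₗ[R] N) :=
  Module.Injective.of_ringEquiv (RingEquiv.refl R) ((Pi.basisFun R A).constr R)

end InjectiveCoefficients

lemma exact_ulift_iff {R : Type*} [Ring R] {M N P : Type*} [AddCommGroup M] [AddCommGroup N]
    [AddCommGroup P] [Module R M] [Module R N] [Module R P] (f : M →ₗ[R] N) (g : N →ₗ[R] P) :
    Function.Exact ((ULift.moduleEquiv.{_, _, u} (R := R) (M := N)).symm.toLinearMap ∘ₗ f)
      ((ULift.moduleEquiv.{_, _, u} (R := R) (M := P)).symm.toLinearMap ∘ₗ g ∘ₗ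
        (ULift.moduleEquiv.{_, _, u} (R := R) (M := N)).toLinearMap) ↔
      Function.Exact f g :=
  LinearEquiv.postcomp_exact_iff_exact.trans (LinearEquiv.conj_symm_exact_iff_exact f g _)

namespace MvPolynomial

attribute [local instance] MvPolynomial.gradedAlgebra

variable {σ K : Type*} [CommSemiring K]

lemma homogeneousComponent_succ_X_mul (i : σ) (m : ℕ) (p : MvPolynomial σ K) :
    homogeneousComponent (m + 1) (X i * p) = X i * homogeneousComponent m p := by
  rw [← decomposition.decompose'_apply, ← decomposition.decompose'_apply, add_comm]
  exact DirectSum.coe_decompose_mul_add_of_left_mem (homogeneousSubmodule σ K)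
    ((mem_homogeneousSubmodule 1 _).mpr (isHomogeneous_X K i))

lemma sum_homogeneousComponent_comp {ι : Type*} [Fintype ι] (F : ι → MvPolynomial σ K) :
    ∑ m ∈ range ((univ.sup fun i => (F i).totalDegree) + 1), homogeneousComponent m ∘ F = F := by
  funext i
  rw [Finset.sum_apply]
  refine (sum_subset (range_subset_range.mpr (Nat.succ_le_succ (le_sup (mem_univ i))))
    fun m _ hm => homogeneousComponent_eq_zero m (F i) ?_).symm.trans
      (sum_homogeneousComponent _)
  simpa [Nat.lt_succ_iff] using hm

end MvPolynomial

namespace Koszul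

section Exterior

variable {σ : Type*} [LinearOrder σ]

-- `F : Finset σ → M` stands for `∑ J, F J • e_J` in the exterior algebra on `σ`; `contract i`
-- is the interior product with `e_iᵛ` and `wedge j` is `e_j ∧ ·`, computed from
-- `e_i ∧ e_J = sign i J • e_{J ∪ i}` for `i ∉ J`.
def sign (i : σ) (J : Finset σ) : ℤ := (-1) ^ #{j ∈ J | j < i}

lemma sign_mul_self (i : σ) (J : Finset σ) : sign i J * sign i J = 1 := by
  rw [sign, ← pow_add, Even.neg_one_pow ⟨_, rfl⟩]

lemma sign_insert {i j : σ} {J : Finset σ} (hj : j ∉ J) :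
    sign i (insert j J) = (if j < i then -1 else 1) * sign i J := by
  unfold sign
  rw [filter_insert]
  split_ifs with hji
  · rw [card_insert_of_notMem (fun h => hj (mem_filter.mp h).1), pow_succ, mul_comm]
  · rw [one_mul]

lemma sign_insert_mul_sign_insert {i j : σ} {J : Finset σ} (hij : i ≠ j) (hi : i ∉ J)
    (hj : j ∉ J) : sign i (insert j J) * sign j (insert i J) = -(sign i J * sign j J) := by
  rw [sign_insert hj, sign_insert hi]
  rcases hij.lt_or_gt with h | h
  · rw [if_neg h.not_gt, if_pos h]; ring
  · rw [if_pos h, if_neg h.not_gt]; ring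

lemma sign_mul_sign_insert {i j : σ} {J : Finset σ} (hij : i ≠ j) (hi : i ∉ J)
    (hj : j ∉ J) : sign i J * sign j (insert i J) = -(sign j J * sign i (insert j J)) := by
  rw [sign_insert hj, sign_insert hi]
  rcases hij.lt_or_gt with h | h
  · rw [if_neg h.not_gt, if_pos h]; ring
  · rw [if_pos h, if_neg h.not_gt]; ring

variable {M : Type*} [AddCommGroup M]

def contract (i : σ) : (Finset σ → M) →+ (Finset σ → M) where
  toFun F I := if i ∈ I then 0 else sign i I • F (insert i I)
  map_zero' := by ext I; simp
  map_add' F G := by ext I; by_cases h : i ∈ I <;> simp [h]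

def wedge (j : σ) : (Finset σ → M) →+ (Finset σ → M) where
  toFun F J := if j ∈ J then sign j (J.erase j) • F (J.erase j) else 0
  map_zero' := by ext I; simp
  map_add' F G := by ext J; by_cases h : j ∈ J <;> simp [h]

lemma contract_apply (i : σ) (F : Finset σ → M) (I : Finset σ) :
    contract i F I = if i ∈ I then 0 else sign i I • F (insert i I) := rfl

lemma wedge_apply (j : σ) (F : Finset σ → M) (J : Finset σ) :
    wedge j F J = if j ∈ J then sign j (J.erase j) • F (J.erase j) else 0 := rfl

lemma contract_contract_add (i j : σ) (F : Finset σ → M) :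
    contract i (contract j F) + contract j (contract i F) = 0 := by
  ext I
  simp only [Pi.add_apply, contract_apply, Pi.zero_apply]
  by_cases hi : i ∈ I
  · simp [hi]
  by_cases hj : j ∈ I
  · simp [hj]
  obtain rfl | hij := eq_or_ne i j
  · simp
  rw [if_neg hi, if_neg hj, if_neg (by simp [hij.symm, hj]), if_neg (by simp [hij, hi]),
    insert_comm, smul_smul, smul_smul, sign_mul_sign_insert hij hi hj, neg_smul,
    neg_add_cancel]

lemma contract_wedge_add_wedge_contract (i j : σ) (F : Finset σ → M) :
    contract i (wedge j F) + wedge j (contract i F) = if i = j then F else 0 := by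
  ext I
  simp only [Pi.add_apply, contract_apply, wedge_apply]
  obtain rfl | hij := eq_or_ne i j
  · by_cases hi : i ∈ I
    · simp [hi, smul_smul, sign_mul_self, insert_erase hi]
    · simp [hi, smul_smul, sign_mul_self, erase_insert hi]
  rw [if_neg hij, Pi.zero_apply]
  by_cases hi : i ∈ I
  · simp [hi, hij]
  by_cases hj : j ∈ I
  · set J := I.erase j
    have hiJ : i ∉ J := fun h => hi (mem_of_mem_erase h)
    have hIJ : insert j J = I := insert_erase hj
    rw [if_neg hi, if_pos (mem_insert_of_mem hj), if_pos hj, if_neg hiJ, smul_smul, smul_smul,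
      ← hIJ, insert_comm i j J, erase_insert (by simp [hij.symm, J]),
      sign_insert_mul_sign_insert hij hiJ (notMem_erase j I), mul_comm (sign j J), neg_smul,
      neg_add_cancel]
  · simp [hi, hj, hij.symm]

lemma wedge_contract_self (j : σ) (F : Finset σ → M) (I : Finset σ) :
    wedge j (contract j F) I = if j ∈ I then F I else 0 := by
  by_cases hj : j ∈ I <;> simp [wedge_apply, contract_apply, hj, smul_smul, sign_mul_self,
    insert_erase]

lemma contract_smul {R : Type*} [Semiring R] [Module R M] (c : R) (i : σ) (F : Finset σ → M) :
    contract i (c • F) = c • contract i F := by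
  ext I; by_cases h : i ∈ I <;> simp [contract_apply, h, smul_comm c]

lemma wedge_smul {R : Type*} [Semiring R] [Module R M] (c : R) (j : σ) (F : Finset σ → M) :
    wedge j (c • F) = c • wedge j F := by
  ext J; by_cases h : j ∈ J <;> simp [wedge_apply, h, smul_comm c]

lemma contract_comp {G : Type*} [FunLike G M M] [AddMonoidHomClass G M M] (φ : G) (i : σ)
    (F : Finset σ → M) : contract i (φ ∘ F) = φ ∘ contract i F := by
  ext I; by_cases h : i ∈ I <;> simp [contract_apply, h, map_zsmul]

end Exterior

section Chains

variable {σ K : Type*} [CommRing K]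

variable (K) in
def chainsOfDegree (s : ℕ) : Submodule (MvPolynomial σ K) (Finset σ → MvPolynomial σ K) where
  carrier := {F | ∀ J, #J ≠ s → F J = 0}
  add_mem' hF hG J hJ := by simp [hF J hJ, hG J hJ]
  zero_mem' _ _ := rfl
  smul_mem' c F hF J hJ := by simp [hF J hJ]

lemma comp_mem_chainsOfDegree {G : Type*} [FunLike G (MvPolynomial σ K) (MvPolynomial σ K)]
    [AddMonoidHomClass G (MvPolynomial σ K) (MvPolynomial σ K)] (φ : G) {s : ℕ}
    {F : Finset σ → MvPolynomial σ K} (hF : F ∈ chainsOfDegree K s) :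
    φ ∘ F ∈ chainsOfDegree K s := fun J hJ => by simp [hF J hJ]

variable (σ K) in
abbrev Chain (s : ℕ) : Type _ := {I : Finset σ // #I = s} → MvPolynomial σ K

variable (K) in
def toTotal (s : ℕ) : Chain σ K s →ₗ[MvPolynomial σ K] (Finset σ → MvPolynomial σ K) :=
  Function.ExtendByZero.linearMap _ Subtype.val

variable (K) in
def ofTotal (s : ℕ) : (Finset σ → MvPolynomial σ K) →ₗ[MvPolynomial σ K] Chain σ K s :=
  LinearMap.funLeft _ _ Subtype.val

lemma ofTotal_toTotal {s : ℕ} (f : Chain σ K s) : ofTotal K s (toTotal K s f) = f :=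
  funext fun I => Subtype.val_injective.extend_apply f 0 I

lemma toTotal_apply {s : ℕ} (f : Chain σ K s) (I : {I : Finset σ // #I = s}) :
    toTotal K s f I = f I :=
  Subtype.val_injective.extend_apply f 0 I

lemma toTotal_mem_chainsOfDegree {s : ℕ} (f : Chain σ K s) :
    toTotal K s f ∈ chainsOfDegree K s := fun _ hJ =>
  Function.extend_apply' _ _ _ fun ⟨I, hI⟩ => hJ (hI ▸ I.2)

lemma toTotal_ofTotal {s : ℕ} {F : Finset σ → MvPolynomial σ K}
    (hF : F ∈ chainsOfDegree K s) : toTotal K s (ofTotal K s F) = F := by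
  funext J
  by_cases hJ : #J = s
  · exact Subtype.val_injective.extend_apply (ofTotal K s F) 0 ⟨J, hJ⟩
  · exact (toTotal_mem_chainsOfDegree _ J hJ).trans (hF J hJ).symm

end Chains

section Differential

variable {σ : Type*} [LinearOrder σ] {K : Type*} [CommRing K]

lemma contract_mem_chainsOfDegree (i : σ) {s : ℕ} {F : Finset σ → MvPolynomial σ K}
    (hF : F ∈ chainsOfDegree K (s + 1)) : contract i F ∈ chainsOfDegree K s := by
  intro J hJ
  by_cases hi : i ∈ J
  · simp [contract_apply, hi]
  · simp [contract_apply, hi, hF _ (by rw [card_insert_of_notMem hi]; omega)]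

lemma wedge_mem_chainsOfDegree (j : σ) {s : ℕ} {F : Finset σ → MvPolynomial σ K}
    (hF : F ∈ chainsOfDegree K s) : wedge j F ∈ chainsOfDegree K (s + 1) := by
  intro J hJ
  by_cases hj : j ∈ J
  · have := card_pos.mpr ⟨j, hj⟩
    simp [wedge_apply, hj, hF _ (by rw [card_erase_of_mem hj]; omega)]
  · simp [wedge_apply, hj]

variable [Fintype σ]

variable (K) in
def diff :
    (Finset σ → MvPolynomial σ K) →ₗ[MvPolynomial σ K] (Finset σ → MvPolynomial σ K) where
  toFun F := ∑ i, (X i : MvPolynomial σ K) • contract i F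
  map_add' F G := by simp [smul_add, sum_add_distrib]
  map_smul' c F := by simp [contract_smul, smul_sum, smul_comm c]

def homotopy (F : Finset σ → MvPolynomial σ K) : Finset σ → MvPolynomial σ K :=
  ∑ j, wedge j (pderiv j ∘ F)

lemma diff_eq_sum (F : Finset σ → MvPolynomial σ K) :
    diff K F = ∑ i, (X i : MvPolynomial σ K) • contract i F := rfl

lemma diff_apply (F : Finset σ → MvPolynomial σ K) (I : Finset σ) :
    diff K F I = ∑ i, X i * contract i F I := by
  simp [diff]

lemma diff_homotopy_add_homotopy_diff (F : Finset σ → MvPolynomial σ K) (I : Finset σ) :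
    diff K (homotopy F) I + homotopy (diff K F) I =
      #I • F I + ∑ i, (X i : MvPolynomial σ K) * pderiv i (F I) := by
  have h1 : diff K (homotopy F) =
      ∑ i, ∑ j, (X i : MvPolynomial σ K) • contract i (wedge j (pderiv j ∘ F)) := by
    simp only [diff, homotopy, map_sum]
    exact sum_comm
  have h2 : homotopy (diff K F) = ∑ j, wedge j (contract j F) +
      ∑ i, ∑ j, (X i : MvPolynomial σ K) • wedge j (contract i (pderiv j ∘ F)) := by
    have : ∀ j, pderiv j ∘ diff K F =
        contract j F + ∑ i, (X i : MvPolynomial σ K) • contract i (pderiv j ∘ F) := fun j => by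
      funext I
      simp [diff, contract_comp, sum_add_distrib, Pi.single_apply, add_comm]
    simp only [homotopy, this, map_add, map_sum, wedge_smul, sum_add_distrib]
    rw [sum_comm]
  have h3 : diff K (homotopy F) + homotopy (diff K F) =
      ∑ j, wedge j (contract j F) + ∑ i, (X i : MvPolynomial σ K) • (pderiv i ∘ F) := by
    rw [h1, h2, add_left_comm, ← sum_add_distrib]
    congr 1
    refine sum_congr rfl fun i _ => ?_
    simp only [← sum_add_distrib, ← smul_add, contract_wedge_add_wedge_contract, smul_ite,
      smul_zero, sum_ite_eq, mem_univ, if_true]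
  rw [← Pi.add_apply, h3]
  simp [wedge_contract_self, Finset.sum_apply]

lemma diff_comp_homogeneousComponent (m : ℕ) (F : Finset σ → MvPolynomial σ K) :
    diff K (homogeneousComponent m ∘ F) = homogeneousComponent (m + 1) ∘ diff K F := by
  funext I
  simp [diff_apply, contract_comp, map_sum, homogeneousComponent_succ_X_mul]

lemma homotopy_zero : homotopy (0 : Finset σ → MvPolynomial σ K) = 0 := by
  refine sum_eq_zero fun j _ => ?_
  rw [show pderiv j ∘ (0 : Finset σ → MvPolynomial σ K) = 0 from funext fun _ => map_zero _,
    map_zero]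

lemma diff_mem_chainsOfDegree {s : ℕ} {F : Finset σ → MvPolynomial σ K}
    (hF : F ∈ chainsOfDegree K (s + 1)) : diff K F ∈ chainsOfDegree K s :=
  Submodule.sum_mem _ fun i _ => Submodule.smul_mem _ _ (contract_mem_chainsOfDegree i hF)

lemma homotopy_mem_chainsOfDegree {s : ℕ} {F : Finset σ → MvPolynomial σ K}
    (hF : F ∈ chainsOfDegree K s) : homotopy F ∈ chainsOfDegree K (s + 1) :=
  Submodule.sum_mem _ fun j _ =>
    wedge_mem_chainsOfDegree j (comp_mem_chainsOfDegree (pderiv j) hF)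

lemma diff_homotopy_comp_homogeneousComponent {s : ℕ} {F : Finset σ → MvPolynomial σ K}
    (hF : F ∈ chainsOfDegree K s) (hdF : diff K F = 0) (m : ℕ) :
    diff K (homotopy (homogeneousComponent m ∘ F)) =
      (s + m) • (homogeneousComponent m ∘ F) := by
  have hd : homogeneousComponent (m + 1) ∘ diff K F = 0 := by
    rw [hdF]; exact funext fun _ => map_zero _
  funext I
  have h := diff_homotopy_add_homotopy_diff (homogeneousComponent m ∘ F) I
  rw [diff_comp_homogeneousComponent, hd, homotopy_zero, Pi.zero_apply, add_zero,
    Function.comp_apply, (homogeneousComponent_isHomogeneous m (F I)).sum_X_mul_pderiv,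
    ← add_smul] at h
  rw [h, Pi.smul_apply, Function.comp_apply]
  by_cases hI : #I = s
  · rw [hI]
  · simp [hF I hI]

variable (K) in
def koszulDiff (s : ℕ) : Chain σ K (s + 1) →ₗ[MvPolynomial σ K] Chain σ K s :=
  ofTotal K s ∘ₗ diff K ∘ₗ toTotal K (s + 1)

lemma toTotal_koszulDiff {s : ℕ} (f : Chain σ K (s + 1)) :
    toTotal K s (koszulDiff K s f) = diff K (toTotal K (s + 1) f) :=
  toTotal_ofTotal (diff_mem_chainsOfDegree (toTotal_mem_chainsOfDegree f))

lemma diff_eq_zero_of_mem_chainsOfDegree_zero {F : Finset σ → MvPolynomial σ K}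
    (hF : F ∈ chainsOfDegree K 0) : diff K F = 0 := by
  funext I
  rw [diff_apply, Pi.zero_apply]
  refine sum_eq_zero fun i _ => ?_
  by_cases hi : i ∈ I
  · simp [contract_apply, hi]
  · simp [contract_apply, hi, hF _ (insert_nonempty i I).card_ne_zero]

end Differential

section Exactness

variable {σ : Type*} [LinearOrder σ] [Fintype σ] {K : Type*} [Field K] [CharZero K]

lemma diff_diff (F : Finset σ → MvPolynomial σ K) : diff K (diff K F) = 0 := by
  have hS : diff K (diff K F) =
      ∑ j, ∑ i, (X i * X j : MvPolynomial σ K) • contract i (contract j F) := by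
    simp only [diff_eq_sum, map_sum, contract_smul, smul_smul]
  have hanti : ∀ i j, (X i * X j : MvPolynomial σ K) • contract i (contract j F) +
      (X j * X i : MvPolynomial σ K) • contract j (contract i F) = 0 := fun i j => by
    rw [mul_comm, ← smul_add, contract_contract_add, smul_zero]
  rw [hS, ← self_eq_neg, eq_neg_iff_add_eq_zero]
  nth_rw 2 [sum_comm]
  simp only [← sum_add_distrib, hanti, sum_const_zero]

lemma exists_diff_eq {s : ℕ} {F : Finset σ → MvPolynomial σ K}
    (hF : F ∈ chainsOfDegree K s) (hdF : diff K F = 0)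
    (h0 : s = 0 → constantCoeff (F ∅) = 0) : ∃ G ∈ chainsOfDegree K (s + 1), diff K G = F := by
  refine ⟨∑ m ∈ range ((univ.sup fun J => (F J).totalDegree) + 1),
    ((s + m : ℕ) : K)⁻¹ • homotopy (homogeneousComponent m ∘ F),
    Submodule.sum_mem _ fun m _ => Submodule.smul_of_tower_mem _ _
      (homotopy_mem_chainsOfDegree (comp_mem_chainsOfDegree _ hF)), ?_⟩
  conv_rhs => rw [← sum_homogeneousComponent_comp F]
  rw [map_sum]
  refine sum_congr rfl fun m _ => ?_
  rw [LinearMap.map_smul_of_tower, diff_homotopy_comp_homogeneousComponent hF hdF,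
    ← Nat.cast_smul_eq_nsmul K, smul_smul]
  -- For `s + m = 0` the coefficient is the junk value `0⁻¹ = 0`, harmless as `h0` kills constants.
  rcases eq_or_ne (s + m) 0 with h | h
  · obtain ⟨rfl, rfl⟩ : s = 0 ∧ m = 0 := by omega
    have : homogeneousComponent 0 ∘ F = 0 := funext fun J => by
      by_cases hJ : #J = 0
      · rw [card_eq_zero.mp hJ, Function.comp_apply, homogeneousComponent_zero,
          ← constantCoeff_eq, h0 rfl, map_zero, Pi.zero_apply]
      · simp [hF J hJ]
    rw [this, smul_zero]
  · rw [inv_mul_cancel₀ (by exact_mod_cast h), one_smul]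

lemma exists_koszulDiff_eq {s : ℕ} (f : Chain σ K s)
    (hf : diff K (toTotal K s f) = 0) (h0 : s = 0 → constantCoeff (toTotal K s f ∅) = 0) :
    ∃ g, koszulDiff K s g = f := by
  obtain ⟨G, hG, hdG⟩ := exists_diff_eq (toTotal_mem_chainsOfDegree f) hf h0
  refine ⟨ofTotal K (s + 1) G, ?_⟩
  rw [koszulDiff, LinearMap.comp_apply, LinearMap.comp_apply, toTotal_ofTotal hG, hdG,
    ofTotal_toTotal]

lemma exact_koszulDiff (s : ℕ) :
    Function.Exact (koszulDiff (σ := σ) K (s + 1)) (koszulDiff K s) := by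
  intro f
  constructor
  · intro hf
    refine exists_koszulDiff_eq f ?_ (by omega)
    rw [← toTotal_koszulDiff, hf, map_zero]
  · rintro ⟨g, rfl⟩
    rw [koszulDiff, LinearMap.comp_apply, LinearMap.comp_apply, toTotal_koszulDiff, diff_diff,
      map_zero]

end Exactness

section Augmentation

variable (σ K : Type*) [Field K]

local instance : Module (MvPolynomial σ K) K := Module.compHom K (eval 0)

def augmentation : Chain σ K 0 →ₗ[MvPolynomial σ K] K where
  toFun f := eval 0 (f ⟨∅, card_empty⟩)
  map_add' _ _ := map_add _ _ _
  map_smul' _ _ := map_mul _ _ _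

lemma augmentation_surjective : Function.Surjective (augmentation σ K) :=
  fun c => ⟨fun _ => C c, eval_C _⟩

lemma exact_koszulDiff_augmentation [LinearOrder σ] [Fintype σ] [CharZero K] :
    Function.Exact (koszulDiff K 0) (augmentation σ K) := by
  intro f
  constructor
  · intro hf
    refine exists_koszulDiff_eq f
      (diff_eq_zero_of_mem_chainsOfDegree_zero (toTotal_mem_chainsOfDegree f)) fun _ => ?_
    rw [← eval_zero, ← hf]
    exact congrArg (eval 0) (toTotal_apply f ⟨∅, card_empty⟩)
  · rintro ⟨g, rfl⟩
    show eval 0 (diff K (toTotal K 1 g) ∅) = 0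
    simp [diff_apply]

def evalZeroDual : CoinducedDual K (MvPolynomial σ K) :=
  CoinducedDual.ofLinearMap (aeval 0).toLinearMap

lemma evalZeroDual_apply (p : MvPolynomial σ K) : evalZeroDual σ K p = eval 0 p := by
  simp [evalZeroDual]

lemma smul_evalZeroDual (p : MvPolynomial σ K) :
    p • evalZeroDual σ K = (C (eval 0 p) : MvPolynomial σ K) • evalZeroDual σ K :=
  CoinducedDual.ext fun x => by simp [evalZeroDual_apply]

def toHomEvalZeroDual :
    K →ₗ[MvPolynomial σ K] (K →ₗ[MvPolynomial σ K] CoinducedDual K (MvPolynomial σ K)) where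
  toFun q :=
    { toFun := fun c => (C (c * q) : MvPolynomial σ K) • evalZeroDual σ K
      map_add' := fun c c' => by rw [add_mul, C_add, add_smul]
      map_smul' := fun p c => by
        show (C (eval 0 p * c * q) : MvPolynomial σ K) • evalZeroDual σ K =
          p • (C (c * q) : MvPolynomial σ K) • evalZeroDual σ K
        rw [smul_comm p, smul_evalZeroDual σ K p, smul_smul, ← C_mul]
        ring_nf }
  map_add' q q' := LinearMap.ext fun c => by
    simp only [LinearMap.coe_mk, AddHom.coe_mk, LinearMap.add_apply, mul_add, C_add, add_smul]
  map_smul' p q := LinearMap.ext fun c => by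
    show (C (c * (eval 0 p * q)) : MvPolynomial σ K) • evalZeroDual σ K =
      p • (C (c * q) : MvPolynomial σ K) • evalZeroDual σ K
    rw [smul_comm p, smul_evalZeroDual σ K p, smul_smul, ← C_mul]
    ring_nf

lemma toHomEvalZeroDual_apply (q c : K) (p : MvPolynomial σ K) :
    toHomEvalZeroDual σ K q c p = eval 0 p * (c * q) := by
  simp [toHomEvalZeroDual, evalZeroDual_apply]

lemma toHomEvalZeroDual_bijective : Function.Bijective (toHomEvalZeroDual σ K) := by
  refine ⟨fun q q' h => ?_,
    fun h => ⟨h 1 1, LinearMap.ext fun c => CoinducedDual.ext fun p => ?_⟩⟩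
  · simpa [toHomEvalZeroDual_apply] using congrArg (fun φ => φ 1 1) h
  · have key : ∀ a : K, h a 1 = a * h 1 1 := fun a =>
      calc h a 1 = h ((C a : MvPolynomial σ K) • (1 : K)) 1 := by
            rw [show (C a : MvPolynomial σ K) • (1 : K) = a from (mul_one _).trans (eval_C a)]
        _ = a * h 1 1 := by
          rw [map_smul, CoinducedDual.smul_apply, one_mul, ← algebraMap_eq,
            CoinducedDual.apply_algebraMap]
    calc toHomEvalZeroDual σ K (h 1 1) c p = h (eval 0 p * c) 1 := by
          rw [toHomEvalZeroDual_apply, key (eval 0 p * c), mul_assoc]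
      _ = (p • h c) 1 := by rw [← map_smul]; rfl
      _ = h c p := by rw [CoinducedDual.smul_apply, one_mul]

end Augmentation

universe w in
theorem exists_injective_resolution (σ K : Type u) [Fintype σ] [LinearOrder σ] [Field K]
    [CharZero K] :
    letI : Module (MvPolynomial σ K) K := Module.compHom K (eval 0)
    ∃ (E : ℕ → ModuleCat.{max u w} (MvPolynomial σ K)) (ι : K →ₗ[MvPolynomial σ K] E 0)
      (d : ∀ s : ℕ, E s →ₗ[MvPolynomial σ K] E (s + 1)),
      (∀ s, Module.Injective (MvPolynomial σ K) (E s)) ∧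
      (∀ s, Fintype.card σ < s → Subsingleton (E s)) ∧
      Function.Injective ι ∧ Function.Exact ι (d 0) ∧ ∀ s, Function.Exact (d s) (d (s + 1)) := by
  let _ : Module (MvPolynomial σ K) K := Module.compHom K (eval 0)
  let D := CoinducedDual K (MvPolynomial σ K)
  refine ⟨fun s => ModuleCat.of _ (ULift.{w} (Chain σ K s →ₗ[MvPolynomial σ K] D)),
    ULift.moduleEquiv.symm.toLinearMap ∘ₗ
      LinearMap.lcomp _ D (augmentation σ K) ∘ₗ toHomEvalZeroDual σ K,
    fun s => ULift.moduleEquiv.symm.toLinearMap ∘ₗ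
      LinearMap.lcomp _ D (koszulDiff K s) ∘ₗ ULift.moduleEquiv.toLinearMap,
    fun s => Module.ulift_injective_of_injective _ (Module.Injective.linearMap_pi _),
    fun s hs => ?_, ?_, ?_, fun s => ?_⟩
  · have : IsEmpty {I : Finset σ // #I = s} := ⟨fun I => by have := I.1.card_le_univ; omega⟩
    infer_instance
  · exact ULift.moduleEquiv.symm.injective.comp
      ((LinearMap.lcomp_injective_of_surjective _ (augmentation_surjective σ K)).comp
        (toHomEvalZeroDual_bijective σ K).1)
  · exact (exact_ulift_iff _ _).mpr
      ((toHomEvalZeroDual_bijective σ K).2.comp_exact_iff_exact.mpr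
        (LinearMap.exact_lcomp_of_exact_of_surjective _ (exact_koszulDiff_augmentation σ K)
          (augmentation_surjective σ K)))
  · exact (exact_ulift_iff _ _).mpr (LinearEquiv.precomp_exact_iff_exact.mpr
      (Module.Injective.exact_lcomp (exact_koszulDiff s)))

end Koszul

end

/-- Let `R = ℚ[x_1, …, x_r]` and regard `ℚ` as an `R`-module via
evaluation at `0`.  Then `ℚ` has injective dimension at most `r` as an `R`-module:
there is an exact sequence of `R`-modules `0 → ℚ → E_0 → E_1 → ⋯ → E_r → 0` in which
each `E_s` is an injective `R`-module.  (The modules `E_s` for `s > r` are zero, which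
encodes that the sequence stops at `E_r`.) -/
theorem stmt6 (r : ℕ) :
    letI R := MvPolynomial (Fin r) ℚ
    letI : Module R ℚ := qModule r
    ∃ (E : ℕ → ModuleCat R) (ι : ℚ →ₗ[R] E 0) (d : ∀ s : ℕ, E s →ₗ[R] E (s + 1)),
      (∀ s : ℕ, s ≤ r → Module.Injective R (E s)) ∧
      (∀ s : ℕ, r < s → Subsingleton (E s)) ∧
      Function.Injective ι ∧
      LinearMap.range ι = LinearMap.ker (d 0) ∧
      (∀ s : ℕ, LinearMap.range (d s) = LinearMap.ker (d (s + 1))) := by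
  let _ : Module (MvPolynomial (Fin r) ℚ) ℚ := qModule r
  obtain ⟨E, ι, d, hE, hzero, hι, hι_exact, hd⟩ :=
    Koszul.exists_injective_resolution (Fin r) ℚ
  exact ⟨E, ι, d, fun s _ => hE s, fun s hs => hzero s (by rwa [Fintype.card_fin]), hι,
    hι_exact.linearMap_ker_eq.symm, fun s => (hd s).linearMap_ker_eq.symm⟩
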